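/- For arbitrary scalars p and q, the skew-symmetric bilinear map φ_6(p,q) on h_2 defined by φ_6(e_1,e_3) = p e_1, φ_6(e_2,e_3) = e_1 + q e_2, φ_6(e_3,e_4) = −q e_4, φ_6(e_3,e_5) = −2q e_5, and zero otherwise, is a 2-cocycle of h_2 with adjoint coefficients. -/

import Mathlib

/-!
The bracket of `h₂` takes values in the centre `ℝ e₅`, and `φ₆` maps the centre into itself:
`φ₆(c e₅, z) = 2 q c z₃ e₅`. Hence every term of the cocycle expression is a multiple of `e₅`,
and the cocycle condition reduces to a polynomial identity in the coordinates of `x, y, z`.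
-/

noncomputable section

/-- The underlying space of the 5-dimensional Heisenberg Lie algebra `h₂`. -/
abbrev V : Type := Fin 5 → ℝ

/-- Basis vectors: `e 0, …, e 4` are `e₁, …, e₅`. -/
def e (i : Fin 5) : V := Pi.single i 1

/-- The Heisenberg bracket on `h₂`: `[e₁,e₃] = e₅`, `[e₂,e₄] = e₅`. -/
def br (x y : V) : V :=
  (x 0 * y 2 - x 2 * y 0 + x 1 * y 3 - x 3 * y 1) • e 4

/-- The deformed bracket `[x,y]_t = [x,y] + t • φ x y`. -/
def brt (t : ℝ) (φ : V → V → V) (x y : V) : V := br x y + t • φ x y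

/-- The Chevalley–Eilenberg 2-cocycle condition (adjoint coefficients) for a
skew-symmetric 2-cochain `φ` on `h₂`. -/
def IsCocycle (φ : V → V → V) : Prop :=
  ∀ x y z : V,
    φ (br x y) z - φ (br x z) y + φ (br y z) x
      - br x (φ y z) + br y (φ x z) - br z (φ x y) = 0

/-- `φ₆(p,q)`: `(e₁,e₃) ↦ p e₁`, `(e₂,e₃) ↦ e₁ + q e₂`, `(e₃,e₄) ↦ −q e₄`, `(e₃,e₅) ↦ −2q e₅`, zero otherwise. -/
def phi6 (p q : ℝ) (x y : V) : V :=
  (x 0 * y 2 - x 2 * y 0) • (p • e 0)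
  + (x 1 * y 2 - x 2 * y 1) • (e 0 + q • e 1)
  + (x 2 * y 3 - x 3 * y 2) • ((-q) • e 3)
  + (x 2 * y 4 - x 4 * y 2) • ((-(2*q)) • e 4)

def heisForm (x y : V) : ℝ := x 0 * y 2 - x 2 * y 0 + x 1 * y 3 - x 3 * y 1

theorem br_eq_heisForm_smul (x y : V) : br x y = heisForm x y • e 4 := rfl

theorem phi6_smul_e_four_left (p q c : ℝ) (z : V) :
    phi6 p q (c • e 4) z = (2 * q * c * z 2) • e 4 := by
  simp only [phi6, e, Pi.smul_apply, smul_eq_mul, Pi.single_apply, Fin.reduceEq, ↓reduceIte]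
  module

theorem heisForm_phi6 (p q : ℝ) (x y z : V) :
    heisForm x (phi6 p q y z) =
      -x 2 * (p * (y 0 * z 2 - y 2 * z 0) + (y 1 * z 2 - y 2 * z 1))
        - q * (x 1 * (y 2 * z 3 - y 3 * z 2) + x 3 * (y 1 * z 2 - y 2 * z 1)) := by
  simp only [heisForm, phi6, e, Pi.add_apply, Pi.smul_apply, smul_eq_mul, Pi.single_apply,
    Fin.reduceEq, ↓reduceIte]
  ring

/-- For arbitrary scalars `p, q`, `φ₆(p,q)` is a 2-cocycle of `h₂` with adjoint
coefficients. -/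
theorem phi6_isCocycle (p q : ℝ) : IsCocycle (phi6 p q) := by
  intro x y z
  simp only [br_eq_heisForm_smul, phi6_smul_e_four_left, heisForm_phi6, ← sub_smul, ← add_smul]
  refine smul_eq_zero_of_left ?_ _
  simp only [heisForm]
  ring

end
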